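/- arXiv:1605.06263 — 4 statements merged into one kernel-verified Lean document; each statement's English description precedes it below -/
import Mathlib

section
/- For every m ≥ 1 there exists a function B_m : (ℕ₊ → ℕ₊) → ℕ, monotone in the pointwise order on non-decreasing functions, such that every f-bounded antichain α₁, ..., α_t in ℕ^m has length t ≤ B_m(f), for every non-decreasing f : ℕ₊ → ℕ₊. -/
/-!
Bounded bad sequences have bounded length: if arbitrarily long ones existed, their values at each
position range over a finite set, so by compactness of the product of these finite sets (Kőnig's
lemma) they would converge to an infinite bad sequence, contradicting Dickson's lemma that
`ℕ^m` is well quasi-ordered. The bound `B f` is the supremum of the possible lengths, which is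
monotone in `f` because raising `f` only relaxes the size constraint.
-/

open Set

variable {α : Type*} [LE α]

def badLengths (S : ℕ → Set α) : Set ℕ :=
  {t | ∃ a : Fin t → α, (∀ i j, i < j → ¬ a i ≤ a j) ∧ ∀ i : Fin t, a i ∈ S i}

lemma zero_mem_badLengths (S : ℕ → Set α) : 0 ∈ badLengths S :=
  ⟨Fin.elim0, fun i => i.elim0, fun i => i.elim0⟩

lemma badLengths_mono {S S' : ℕ → Set α} (h : ∀ n, S n ⊆ S' n) :
    badLengths S ⊆ badLengths S' := by
  rintro t ⟨a, hbad, hS⟩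
  exact ⟨a, hbad, fun i => h i (hS i)⟩

lemma mem_badLengths_of_le {S : ℕ → Set α} {s t : ℕ} (hst : s ≤ t) (ht : t ∈ badLengths S) :
    s ∈ badLengths S := by
  obtain ⟨a, hbad, hS⟩ := ht
  exact ⟨a ∘ Fin.castLE hst, fun i j hij => hbad _ _ hij, fun i => hS (Fin.castLE hst i)⟩

theorem exists_bad_seq_of_forall_mem_badLengths {S : ℕ → Set α} (hS : ∀ n, (S n).Finite)
    (h : ∀ N, N ∈ badLengths S) :
    ∃ x : ℕ → α, (∀ i j, i < j → ¬ x i ≤ x j) ∧ ∀ n, x n ∈ S n := by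
  have hS_ne : ∀ n, (S n).Nonempty := fun n =>
    let ⟨a, _, ha⟩ := h (n + 1)
    ⟨_, ha (Fin.last n)⟩
  have := fun n => (hS n).to_subtype
  let _ : ∀ n, TopologicalSpace (S n) := fun _ => ⊥
  have : ∀ n, DiscreteTopology (S n) := fun _ => ⟨rfl⟩
  let C : ℕ → Set (∀ n, S n) := fun N => {x | ∀ i j, i < j → j < N → ¬ (x i : α) ≤ x j}
  have hC_anti : ∀ N, C (N + 1) ⊆ C N := fun N x hx i j hij hjN =>
    hx i j hij (hjN.trans N.lt_succ_self)
  have hC_closed : ∀ N, IsClosed (C N) := fun N => by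
    simp only [C, ofPred_forall]
    refine isClosed_iInter fun i => isClosed_iInter fun j =>
      isClosed_iInter fun _ => isClosed_iInter fun _ => ?_
    exact IsClosed.preimage (f := fun x : ∀ n, S n => (x i, x j))
      ((continuous_apply i).prodMk (continuous_apply j))
      (isClosed_discrete {p : S i × S j | ¬ (p.1 : α) ≤ p.2})
  have hC_ne : ∀ N, (C N).Nonempty := fun N => by
    obtain ⟨a, hbad, ha⟩ := h N
    refine ⟨fun n => if hn : n < N then ⟨a ⟨n, hn⟩, ha ⟨n, hn⟩⟩ else ⟨_, (hS_ne n).some_mem⟩, ?_⟩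
    intro i j hij hjN
    simpa [hjN, hij.trans hjN] using hbad ⟨i, hij.trans hjN⟩ ⟨j, hjN⟩ hij
  obtain ⟨x, hx⟩ := IsCompact.nonempty_iInter_of_sequence_nonempty_isCompact_isClosed C
    hC_anti hC_ne (hC_closed 0).isCompact hC_closed
  rw [mem_iInter] at hx
  exact ⟨fun n => x n, fun i j hij => hx (j + 1) i j hij j.lt_succ_self, fun n => (x n).2⟩

theorem bddAbove_badLengths [WellQuasiOrderedLE α] {S : ℕ → Set α} (hS : ∀ n, (S n).Finite) :
    BddAbove (badLengths S) := by
  by_contra hunbdd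
  rw [not_bddAbove_iff] at hunbdd
  obtain ⟨x, hbad, -⟩ := exists_bad_seq_of_forall_mem_badLengths hS fun N =>
    let ⟨_, ht, hNt⟩ := hunbdd N
    mem_badLengths_of_le hNt.le ht
  obtain ⟨i, j, hij, hle⟩ := wellQuasiOrdered_le x
  exact hbad i j hij hle

lemma finite_setOf_sum_le (m b : ℕ) : {x : Fin m → ℕ | ∑ k, x k ≤ b}.Finite :=
  (finite_Iic fun _ => b).subset fun _ hx k =>
    (Finset.single_le_sum (fun _ _ => Nat.zero_le _) (Finset.mem_univ k)).trans hx

theorem stmt_2_general (m : ℕ) :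
    ∃ B : (ℕ → ℕ) → ℕ,
      (∀ f f' : ℕ → ℕ, (∀ n, 1 ≤ f n) → (∀ n, 1 ≤ f' n) → Monotone f → Monotone f' →
        (∀ n, f n ≤ f' n) → B f ≤ B f') ∧
      (∀ f : ℕ → ℕ, (∀ n, 1 ≤ f n) → Monotone f →
        ∀ (t : ℕ) (α : Fin t → (Fin m → ℕ)),
          (∀ i j : Fin t, i < j → ¬ α i ≤ α j) →
          (∀ i : Fin t, (∑ k, α i k) ≤ f (i.1 + 1)) →
          t ≤ B f) := by
  let S (f : ℕ → ℕ) (n : ℕ) : Set (Fin m → ℕ) := {x | ∑ k, x k ≤ f (n + 1)}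
  have hS : ∀ f n, (S f n).Finite := fun _ _ => finite_setOf_sum_le m _
  refine ⟨fun f => sSup (badLengths (S f)), ?_, ?_⟩
  · intro f f' _ _ _ _ hff'
    exact csSup_le_csSup (bddAbove_badLengths (hS f')) ⟨0, zero_mem_badLengths _⟩
      (badLengths_mono fun n _ hx => hx.trans (hff' _))
  · intro f _ _ t α hbad hbd
    exact le_csSup (bddAbove_badLengths (hS f)) ⟨α, hbad, hbd⟩

theorem stmt_2 (m : ℕ) (hm : 1 ≤ m) :
    ∃ B : (ℕ → ℕ) → ℕ,
      (∀ f f' : ℕ → ℕ, (∀ n, 1 ≤ f n) → (∀ n, 1 ≤ f' n) → Monotone f → Monotone f' →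
        (∀ n, f n ≤ f' n) → B f ≤ B f') ∧
      (∀ f : ℕ → ℕ, (∀ n, 1 ≤ f n) → Monotone f →
        ∀ (t : ℕ) (α : Fin t → (Fin m → ℕ)),
          (∀ i j : Fin t, i < j → ¬ α i ≤ α j) →
          (∀ i : Fin t, (∑ k, α i k) ≤ f (i.1 + 1)) →
          t ≤ B f) :=
  stmt_2_general m
end

section
/- Let m ≥ 2 and suppose α₁, ..., α_t is an antichain in ℕ^m such that the subsequence indexed by s₁ < s₂ < ... < s_r has the property that deleting the (k+1)-st coordinate from each α_{s_i} yields an antichain in ℕ^{m-1}. Suppose further the original antichain is f-bounded for a non-decreasing f. If there exists an index μ+1 ≤ t with μ = s_r + N, where N bounds the length of any antichain in ℕ^m that is f(s_r + ·)-bounded and has (k+1)-st coordinates all at most f(s_r) (and first k coordinates bounded by a fixed β), then there exists c with s_r < c ≤ μ+1 such that adjoining the (k+1)-deleted vector of α_c to the deleted subsequence still yields an antichain in ℕ^{m-1}. -/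
/-! Suppose no `c` in the window `s_r < c ≤ s_r + N + 1` works. Then each such `α_c`, with its
`(k+1)`-st coordinate deleted, dominates some deleted `α_{s_i}`; since `s_i < c` and the full
vectors form an antichain, the deleted coordinate of `α_c` must be strictly smaller than that of
`α_{s_i}`, hence at most `|α_{s_i}| ≤ f(s_i) ≤ f(s_r)`. So the `N + 1` vectors in the window form
an antichain of the kind bounded by `N`, a contradiction. -/

theorem Fin.le_iff_apply_le_and_removeNth_le {n : ℕ} {α : Type*} [Preorder α]
    (p : Fin (n + 1)) {a b : Fin (n + 1) → α} :
    a ≤ b ↔ a p ≤ b p ∧ p.removeNth a ≤ p.removeNth b := by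
  simp only [Pi.le_def, p.forall_iff_succAbove]
  rfl

theorem Fin.apply_lt_of_removeNth_le_of_not_le {n : ℕ} {α : Type*} [LinearOrder α]
    (p : Fin (n + 1)) {a b : Fin (n + 1) → α} (hle : p.removeNth a ≤ p.removeNth b)
    (hab : ¬ a ≤ b) : b p < a p := by
  rw [p.le_iff_apply_le_and_removeNth_le] at hab
  exact lt_of_not_ge fun h => hab ⟨h, hle⟩

theorem stmt_3 (m k t r : ℕ) (hk : k < m) (hr : 0 < r)
    (f : ℕ → ℕ) (hfmono : Monotone f)
    (α : Fin t → (Fin (m + 1) → ℕ))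
    -- α₁,...,α_t is an f-bounded antichain in ℕ^{m+1}
    (hanti : ∀ i j : Fin t, i < j → ¬ α i ≤ α j)
    (hbdd : ∀ i : Fin t, (∑ x, α i x) ≤ f (i.1 + 1))
    -- a strictly increasing choice of indices s₁ < ... < s_r
    (s : Fin r → Fin t) (hs : StrictMono s)
    -- β ∈ ℕ^k bounding the first k coordinates, and N = B_m^{k+1}(f(s_r + ·), β, f(s_r)):
    -- N bounds the length of every antichain in ℕ^{m+1} which is f(s_r + ·)-bounded,
    -- has its first k coordinates bounded by β and its (k+1)-st coordinate ≤ f(s_r)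
    (β : Fin k → ℕ) (N : ℕ)
    (hN : ∀ (u : ℕ) (γ : Fin u → (Fin (m + 1) → ℕ)),
      (∀ i j : Fin u, i < j → ¬ γ i ≤ γ j) →
      (∀ i : Fin u, (∑ x, γ i x) ≤ f ((s ⟨r - 1, by omega⟩).1 + 1 + (i.1 + 1))) →
      (∀ (i : Fin u) (x : Fin k), γ i ⟨x.1, by omega⟩ ≤ β x) →
      (∀ i : Fin u, γ i ⟨k, by omega⟩ ≤ f ((s ⟨r - 1, by omega⟩).1 + 1)) →
      u ≤ N)
    -- the original antichain also satisfies the β-bound on the first k coordinates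
    (hβ : ∀ (i : Fin t) (x : Fin k), α i ⟨x.1, by omega⟩ ≤ β x)
    -- if μ + 1 ≤ t where μ = s_r + N (in 1-based indexing)
    (hμ : (s ⟨r - 1, by omega⟩).1 + 1 + N + 1 ≤ t) :
    -- then some c with s_r < c ≤ μ + 1 extends the deleted antichain
    ∃ c : Fin t,
      (s ⟨r - 1, by omega⟩).1 + 1 < c.1 + 1 ∧
      c.1 + 1 ≤ (s ⟨r - 1, by omega⟩).1 + 1 + N + 1 ∧
      ∀ i : Fin r,
        ¬ (⟨k, by omega⟩ : Fin (m + 1)).removeNth (α (s i)) ≤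
          (⟨k, by omega⟩ : Fin (m + 1)).removeNth (α c) := by
  by_contra! hcon
  set sr := (s ⟨r - 1, by omega⟩).1
  let window : Fin (N + 1) → Fin t := fun j => ⟨sr + 1 + j.1, by omega⟩
  have hwindow : StrictMono window := fun i j hij => by
    simp only [window, Fin.mk_lt_mk]; omega
  have hs_le : ∀ i : Fin r, (s i).1 ≤ sr := fun i =>
    hs.monotone (Fin.mk_le_mk.mpr (by omega) : i ≤ ⟨r - 1, by omega⟩)
  have hdeleted_le : ∀ j, α (window j) ⟨k, by omega⟩ ≤ f (sr + 1) := by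
    intro j
    obtain ⟨i, hi⟩ := hcon (window j) (by simp [window]) (by simp [window]; omega)
    calc α (window j) ⟨k, by omega⟩ ≤ α (s i) ⟨k, by omega⟩ :=
          (Fin.apply_lt_of_removeNth_le_of_not_le _ hi
            (hanti _ _ (Fin.mk_lt_mk.mpr (by have := hs_le i; omega)))).le
      _ ≤ ∑ x, α (s i) x := Finset.single_le_sum (fun _ _ => Nat.zero_le _) (Finset.mem_univ _)
      _ ≤ f ((s i).1 + 1) := hbdd _
      _ ≤ f (sr + 1) := hfmono (by have := hs_le i; omega)
  have := hN (N + 1) (α ∘ window) (fun i j hij => hanti _ _ (hwindow hij))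
    (fun j => by simpa [window, Nat.add_assoc] using hbdd (window j)) (fun j => hβ _) hdeleted_le
  omega
end

section
/- Let F = {f₁,...,f_s} ⊆ K[x₁,...,x_m] be nonzero polynomials with deg(f_i) ≤ d, and let B₀ = F, B_{n+1} = B_n ∪ S_{B_n} be the sequence of sets produced by Buchberger's algorithm (S_{B_n} being the set of nonzero remainders of S-polynomials of pairs from B_n modulo B_n), with respect to a graded monomial order. Then every b ∈ B_n can be written b = a₁f₁ + ... + a_sf_s with deg(a_i) ≤ (3ⁿ − 1)d for all i. -/
/-!
By induction on `n`, with `Dₙ = (3ⁿ - 1) d`: every element of `Bₙ` is a combination of `F`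
with coefficients of degree `≤ Dₙ`, hence has degree `≤ Dₙ + d`. The S-polynomial `S(p, q)` has
degree `≤ deg p + deg q ≤ 2 (Dₙ + d)`, since its monomial multipliers have degree at most
`deg q` resp. `deg p`. In a graded order the division condition `lm(a_g g) ≼ lm S(p, q)` bounds
`deg a_g ≤ deg a_g g ≤ deg S(p, q)`. Substituting the representations of `p`, `q` and of the
divisors into `r = S(p, q) - ∑ a_g g` gives coefficients of degree `≤ 3 Dₙ + 2 d = Dₙ₊₁`.
-/

open MvPolynomial
open scoped Classical

/-- The leading monomial (exponent vector) of a polynomial with respect to a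
monomial order `ord`; `lmon ord 0 = 0` by convention. -/
noncomputable def lmon {K : Type*} [Field K] {m : ℕ}
    (ord : LinearOrder (Fin m →₀ ℕ)) (f : MvPolynomial (Fin m) K) : Fin m →₀ ℕ :=
  if h : f = 0 then 0 else
    @Finset.max' _ ord f.support (MvPolynomial.support_nonempty.mpr h)

/-- The S-polynomial S(f,g) = (x^γ/lt(f))·f − (x^γ/lt(g))·g, where
x^γ = lcm(lm f, lm g), i.e. γ = lm f ⊔ lm g (componentwise max). -/
noncomputable def spoly {K : Type*} [Field K] {m : ℕ}
    (ord : LinearOrder (Fin m →₀ ℕ)) (f g : MvPolynomial (Fin m) K) :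
    MvPolynomial (Fin m) K :=
  (monomial ((lmon ord f ⊔ lmon ord g) - lmon ord f)) (f.coeff (lmon ord f))⁻¹ * f -
    (monomial ((lmon ord f ⊔ lmon ord g) - lmon ord g)) (g.coeff (lmon ord g))⁻¹ * g

/-- `IsRemainder ord f B r`: `r` is a possible remainder of `f` on multivariate
division by the finite set `B`: `f = Σ_{g ∈ B} a_g g + r` with
`lm(a_g g) ≼ lm f` for all nonzero summands, and `r` reduced modulo `B`
(no leading monomial of an element of `B` divides a monomial of `r`). -/
def IsRemainder {K : Type*} [Field K] {m : ℕ}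
    (ord : LinearOrder (Fin m →₀ ℕ)) (f : MvPolynomial (Fin m) K)
    (B : Finset (MvPolynomial (Fin m) K)) (r : MvPolynomial (Fin m) K) : Prop :=
  ∃ a : MvPolynomial (Fin m) K → MvPolynomial (Fin m) K,
    f = (∑ g ∈ B, a g * g) + r ∧
    (∀ g ∈ B, a g * g ≠ 0 → ord.le (lmon ord (a g * g)) (lmon ord f)) ∧
    (∀ g ∈ B, g ≠ 0 → ∀ β ∈ r.support, ¬ lmon ord g ≤ β)

section Combination

variable {σ R : Type*} [CommRing R]

def IsBoundedCombination (F : Finset (MvPolynomial σ R)) (D : ℕ) (b : MvPolynomial σ R) :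
    Prop :=
  ∃ a : MvPolynomial σ R → MvPolynomial σ R,
    b = ∑ g ∈ F, a g * g ∧ ∀ g ∈ F, (a g).totalDegree ≤ D

namespace IsBoundedCombination

variable {F : Finset (MvPolynomial σ R)} {D E : ℕ} {b c : MvPolynomial σ R}

lemma of_mem (hb : b ∈ F) : IsBoundedCombination F 0 b := by
  refine ⟨fun g => if g = b then 1 else 0, by simp [hb], fun g _ => ?_⟩
  by_cases h : g = b <;> simp [h]

lemma mono (h : IsBoundedCombination F D b) (hDE : D ≤ E) : IsBoundedCombination F E b :=
  let ⟨a, hb, ha⟩ := h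
  ⟨a, hb, fun g hg => (ha g hg).trans hDE⟩

lemma zero : IsBoundedCombination F D 0 :=
  ⟨0, by simp, fun _ _ => by simp⟩

lemma add (hb : IsBoundedCombination F D b) (hc : IsBoundedCombination F D c) :
    IsBoundedCombination F D (b + c) := by
  obtain ⟨a, rfl, ha⟩ := hb
  obtain ⟨a', rfl, ha'⟩ := hc
  refine ⟨a + a', by simp only [Pi.add_apply, add_mul, Finset.sum_add_distrib], fun g hg => ?_⟩
  exact (totalDegree_add _ _).trans (max_le (ha g hg) (ha' g hg))

lemma sub (hb : IsBoundedCombination F D b) (hc : IsBoundedCombination F D c) :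
    IsBoundedCombination F D (b - c) := by
  obtain ⟨a, rfl, ha⟩ := hb
  obtain ⟨a', rfl, ha'⟩ := hc
  refine ⟨a - a', by simp only [Pi.sub_apply, sub_mul, Finset.sum_sub_distrib], fun g hg => ?_⟩
  exact (totalDegree_sub _ _).trans (max_le (ha g hg) (ha' g hg))

lemma mul_left (hb : IsBoundedCombination F D b) (c : MvPolynomial σ R) :
    IsBoundedCombination F (c.totalDegree + D) (c * b) := by
  obtain ⟨a, rfl, ha⟩ := hb
  refine ⟨fun g => c * a g, by simp only [Finset.mul_sum, mul_assoc], fun g hg => ?_⟩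
  exact (totalDegree_mul _ _).trans (add_le_add le_rfl (ha g hg))

lemma sum {ι : Type*} {s : Finset ι} {f : ι → MvPolynomial σ R}
    (h : ∀ i ∈ s, IsBoundedCombination F D (f i)) :
    IsBoundedCombination F D (∑ i ∈ s, f i) :=
  Finset.sum_induction f _ (fun _ _ => add) zero h

lemma totalDegree_le {d : ℕ} (hFd : ∀ g ∈ F, g.totalDegree ≤ d)
    (hb : IsBoundedCombination F D b) : b.totalDegree ≤ D + d := by
  obtain ⟨a, rfl, ha⟩ := hb
  exact totalDegree_finsetSum_le fun g hg =>
    (totalDegree_mul _ _).trans (add_le_add (ha g hg) (hFd g hg))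

end IsBoundedCombination

end Combination

lemma totalDegree_monomial_sup_tsub_le {σ R : Type*} [CommSemiring R] (u w : σ →₀ ℕ) (c : R) :
    (monomial ((u ⊔ w) - u) c).totalDegree ≤ w.degree :=
  (totalDegree_monomial_le _ _).trans <| Finsupp.degree_mono fun i => by
    simpa only [Finsupp.tsub_apply, Finsupp.sup_apply] using
      tsub_le_iff_right.mpr (sup_le le_add_self le_self_add)

section LeadingMonomial

variable {K : Type*} [Field K] {m : ℕ} (ord : LinearOrder (Fin m →₀ ℕ))

lemma lmon_mem_support {f : MvPolynomial (Fin m) K} (hf : f ≠ 0) : lmon ord f ∈ f.support := by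
  rw [lmon, dif_neg hf]
  exact Finset.max'_mem _ _

lemma le_lmon {f : MvPolynomial (Fin m) K} {β : Fin m →₀ ℕ} (hβ : β ∈ f.support) :
    ord.le β (lmon ord f) := by
  have hf : f ≠ 0 := by rintro rfl; simp at hβ
  rw [lmon, dif_neg hf]
  exact @Finset.le_max' _ ord f.support β hβ

lemma degree_lmon_le_totalDegree (f : MvPolynomial (Fin m) K) :
    (lmon ord f).degree ≤ f.totalDegree := by
  by_cases hf : f = 0
  · simp [lmon, hf]
  · exact le_totalDegree (lmon_mem_support ord hf)

lemma totalDegree_le_degree_lmon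
    (hgraded : ∀ a b : Fin m →₀ ℕ, ord.le a b → (∑ x, a x) ≤ ∑ x, b x)
    (f : MvPolynomial (Fin m) K) : f.totalDegree ≤ (lmon ord f).degree :=
  Finset.sup_le fun β hβ => by
    change β.degree ≤ _
    simpa only [Finsupp.degree_eq_sum] using hgraded _ _ (le_lmon ord hβ)

lemma totalDegree_le_of_lmon_le
    (hgraded : ∀ a b : Fin m →₀ ℕ, ord.le a b → (∑ x, a x) ≤ ∑ x, b x)
    {f g : MvPolynomial (Fin m) K} (h : ord.le (lmon ord f) (lmon ord g)) :
    f.totalDegree ≤ g.totalDegree :=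
  calc f.totalDegree ≤ (lmon ord f).degree := totalDegree_le_degree_lmon ord hgraded f
    _ ≤ (lmon ord g).degree := by simpa only [Finsupp.degree_eq_sum] using hgraded _ _ h
    _ ≤ g.totalDegree := degree_lmon_le_totalDegree ord g

lemma totalDegree_monomial_lcm_tsub_left_le (p q : MvPolynomial (Fin m) K) (c : K) :
    (monomial ((lmon ord p ⊔ lmon ord q) - lmon ord p) c).totalDegree ≤ q.totalDegree :=
  (totalDegree_monomial_sup_tsub_le _ _ c).trans (degree_lmon_le_totalDegree ord q)

lemma totalDegree_monomial_lcm_tsub_right_le (p q : MvPolynomial (Fin m) K) (c : K) :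
    (monomial ((lmon ord p ⊔ lmon ord q) - lmon ord q) c).totalDegree ≤ p.totalDegree := by
  rw [sup_comm]
  exact totalDegree_monomial_lcm_tsub_left_le ord q p c

lemma totalDegree_spoly_le (p q : MvPolynomial (Fin m) K) :
    (spoly ord p q).totalDegree ≤ p.totalDegree + q.totalDegree := by
  have hp := (totalDegree_mul _ p).trans <|
    add_le_add_left (totalDegree_monomial_lcm_tsub_left_le ord p q (p.coeff (lmon ord p))⁻¹) _
  have hq := (totalDegree_mul _ q).trans <|
    add_le_add_left (totalDegree_monomial_lcm_tsub_right_le ord p q (q.coeff (lmon ord q))⁻¹) _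
  exact (totalDegree_sub _ _).trans (max_le (by omega) (by omega))

lemma IsRemainder.exists_totalDegree_quotient_le
    (hgraded : ∀ a b : Fin m →₀ ℕ, ord.le a b → (∑ x, a x) ≤ ∑ x, b x)
    {f r : MvPolynomial (Fin m) K} {B : Finset (MvPolynomial (Fin m) K)} (hB : 0 ∉ B)
    (h : IsRemainder ord f B r) :
    ∃ a : MvPolynomial (Fin m) K → MvPolynomial (Fin m) K,
      f = ∑ g ∈ B, a g * g + r ∧ ∀ g ∈ B, (a g).totalDegree ≤ f.totalDegree := by
  obtain ⟨a, hf, hlm, -⟩ := h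
  refine ⟨a, hf, fun g hg => ?_⟩
  have hg0 : g ≠ 0 := fun h => hB (h ▸ hg)
  by_cases ha : a g = 0
  · simp [ha]
  calc (a g).totalDegree ≤ (a g * g).totalDegree := by
        rw [totalDegree_mul_of_isDomain ha hg0]; exact le_self_add
    _ ≤ f.totalDegree :=
        totalDegree_le_of_lmon_le ord hgraded (hlm g hg (mul_ne_zero ha hg0))

lemma IsBoundedCombination.of_isRemainder_spoly
    (hgraded : ∀ a b : Fin m →₀ ℕ, ord.le a b → (∑ x, a x) ≤ ∑ x, b x)
    {F B : Finset (MvPolynomial (Fin m) K)} {D d : ℕ} (hFd : ∀ g ∈ F, g.totalDegree ≤ d)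
    (hB : ∀ g ∈ B, IsBoundedCombination F D g) (hB0 : 0 ∉ B)
    {p q r : MvPolynomial (Fin m) K} (hp : p ∈ B) (hq : q ∈ B)
    (hr : IsRemainder ord (spoly ord p q) B r) :
    IsBoundedCombination F (3 * D + 2 * d) r := by
  obtain ⟨a, hspoly, ha⟩ := hr.exists_totalDegree_quotient_le ord hgraded hB0
  have hdp := (hB p hp).totalDegree_le hFd
  have hdq := (hB q hq).totalDegree_le hFd
  have hS := totalDegree_spoly_le ord p q
  rw [eq_sub_of_add_eq' hspoly.symm]
  refine .sub ?_ (.sum fun g hg => ((hB g hg).mul_left (a g)).mono (by linarith [ha g hg]))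
  rw [spoly]
  refine .sub (((hB p hp).mul_left _).mono ?_) (((hB q hq).mul_left _).mono ?_)
  · linarith [totalDegree_monomial_lcm_tsub_left_le ord p q (p.coeff (lmon ord p))⁻¹]
  · linarith [totalDegree_monomial_lcm_tsub_right_le ord p q (q.coeff (lmon ord q))⁻¹]

end LeadingMonomial

theorem stmt_13_general {K : Type*} [Field K] (m : ℕ)
    (ord : LinearOrder (Fin m →₀ ℕ))
    (hgraded : ∀ a b : Fin m →₀ ℕ, ord.le a b → (∑ x, a x) ≤ ∑ x, b x)
    (d : ℕ)
    (F : Finset (MvPolynomial (Fin m) K)) (hF0 : (0 : MvPolynomial (Fin m) K) ∉ F)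
    (hFd : ∀ g ∈ F, g.totalDegree ≤ d)
    (B : ℕ → Finset (MvPolynomial (Fin m) K))
    (hB0 : B 0 = F)
    (hstep : ∀ (n : ℕ) (b : MvPolynomial (Fin m) K),
      b ∈ B (n + 1) ↔ b ∈ B n ∨
        (b ≠ 0 ∧ ∃ p ∈ B n, ∃ q ∈ B n, IsRemainder ord (spoly ord p q) (B n) b)) :
    ∀ n : ℕ, ∀ b ∈ B n,
      ∃ a : MvPolynomial (Fin m) K → MvPolynomial (Fin m) K,
        b = ∑ g ∈ F, a g * g ∧ ∀ g ∈ F, (a g).totalDegree ≤ (3 ^ n - 1) * d := by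
  have hB_ne_zero : ∀ n, 0 ∉ B n := by
    intro n
    induction n with
    | zero => rwa [hB0]
    | succ n ih =>
      intro h
      rcases (hstep n 0).mp h with h | ⟨h0, -⟩
      exacts [ih h, h0 rfl]
  intro n
  induction n with
  | zero =>
    intro b hb
    rw [hB0] at hb
    exact (IsBoundedCombination.of_mem hb).mono (Nat.zero_le _)
  | succ n ih =>
    intro b hb
    have hpos : 1 ≤ 3 ^ n := Nat.one_le_pow n 3 (by norm_num)
    have hmono : 3 ^ n - 1 ≤ 3 ^ (n + 1) - 1 := by rw [pow_succ]; omega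
    have hstep_bound : 3 * (3 ^ n - 1) + 2 = 3 ^ (n + 1) - 1 := by rw [pow_succ]; omega
    rcases (hstep n b).mp hb with hb | ⟨-, p, hp, q, hq, hr⟩
    · exact IsBoundedCombination.mono (ih b hb) (Nat.mul_le_mul_right d hmono)
    · refine (IsBoundedCombination.of_isRemainder_spoly ord hgraded hFd ih (hB_ne_zero n)
        hp hq hr).mono ?_
      rw [← hstep_bound]
      linarith

theorem stmt_13 {K : Type*} [Field K] (m : ℕ)
    (ord : LinearOrder (Fin m →₀ ℕ))
    (hzero : ∀ a : Fin m →₀ ℕ, ord.le 0 a)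
    (hadd : ∀ a b c : Fin m →₀ ℕ, ord.le a b → ord.le (a + c) (b + c))
    (hgraded : ∀ a b : Fin m →₀ ℕ, ord.le a b → (∑ x, a x) ≤ ∑ x, b x)
    (d : ℕ) (hd : 1 ≤ d)
    (F : Finset (MvPolynomial (Fin m) K)) (hF0 : (0 : MvPolynomial (Fin m) K) ∉ F)
    (hFd : ∀ g ∈ F, g.totalDegree ≤ d)
    (B : ℕ → Finset (MvPolynomial (Fin m) K))
    (hB0 : B 0 = F)
    (hstep : ∀ (n : ℕ) (b : MvPolynomial (Fin m) K),
      b ∈ B (n + 1) ↔ b ∈ B n ∨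
        (b ≠ 0 ∧ ∃ p ∈ B n, ∃ q ∈ B n, IsRemainder ord (spoly ord p q) (B n) b)) :
    ∀ n : ℕ, ∀ b ∈ B n,
      ∃ a : MvPolynomial (Fin m) K → MvPolynomial (Fin m) K,
        b = ∑ g ∈ F, a g * g ∧ ∀ g ∈ F, (a g).totalDegree ≤ (3 ^ n - 1) * d :=
  stmt_13_general m ord hgraded d F hF0 hFd B hB0 hstep
end

section
/- The degree bound in effective ideal membership is independent of the field: if Γ : ℕ₊ × ℕ₊ × ℕ → ℕ satisfies, for the field ℚ say, that every g ∈ ⟨f₁,...,f_s⟩ ⊆ K[x₁,...,x_m] with deg f_i ≤ d has a representation with cofactor degrees ≤ Γ(m,d,deg g) via the Buchberger-based construction, then the same function Γ works for every field K, since the bound is derived purely combinatorially from degree estimates in the division algorithm and antichain bounds in ℕ^m. -/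
/-!
Run Buchberger's algorithm for the graded order `degLex`, starting from `f₁, …, f_s`. If all
generators in the current family have total degree `≤ D` and cofactors (with respect to the `fᵢ`)
of degree `≤ E`, the remainder of an S-polynomial has degree `≤ 2D` and cofactors of degree
`≤ 2D + E`; so the `j`-th adjoined element has degree `≤ 2^(j+1) d` and cofactors of degree
`≤ (2^(j+2) - 2) d`. The leading monomials of some nonzero `f_{i₀}` followed by the adjoined
elements form a sequence in `ℕ^m` in which no term divides a later one, with norms controlled by
`n ↦ 3ⁿ d`, so fewer than `B` elements are adjoined. Once no remainder is left, Buchberger's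
criterion gives every member `g` of the ideal a standard representation, whose cofactors have
degree `≤ deg g` since `degLex` is graded.
-/

open MvPolynomial

namespace MvPolynomial

variable {σ R ι : Type*} [CommSemiring R] [Fintype ι]

def boundedSpan (f : ι → MvPolynomial σ R) (n : ℕ) : Submodule R (MvPolynomial σ R) where
  carrier := {p | ∃ h : ι → MvPolynomial σ R, p = ∑ i, h i * f i ∧ ∀ i, (h i).totalDegree ≤ n}
  zero_mem' := ⟨0, by simp, by simp⟩
  add_mem' := by
    rintro _ _ ⟨h, rfl, hh⟩ ⟨h', rfl, hh'⟩
    refine ⟨h + h', by simp [add_mul, Finset.sum_add_distrib], fun i => ?_⟩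
    exact (totalDegree_add _ _).trans (max_le (hh i) (hh' i))
  smul_mem' := by
    rintro a _ ⟨h, rfl, hh⟩
    refine ⟨a • h, by simp [Finset.smul_sum], fun i => ?_⟩
    exact (totalDegree_smul_le a (h i)).trans (hh i)

variable {f : ι → MvPolynomial σ R} {m n : ℕ} {p : MvPolynomial σ R}

theorem boundedSpan_mono (hmn : m ≤ n) : boundedSpan f m ≤ boundedSpan f n := by
  rintro _ ⟨h, rfl, hh⟩
  exact ⟨h, rfl, fun i => (hh i).trans hmn⟩

theorem apply_mem_boundedSpan_zero [DecidableEq ι] (i : ι) : f i ∈ boundedSpan f 0 :=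
  ⟨Pi.single i 1, by simp [Pi.single_apply], fun j => by
    rcases eq_or_ne j i with rfl | hj <;> simp [*]⟩

theorem mul_mem_boundedSpan (q : MvPolynomial σ R) (hp : p ∈ boundedSpan f n) :
    q * p ∈ boundedSpan f (q.totalDegree + n) := by
  obtain ⟨h, rfl, hh⟩ := hp
  refine ⟨fun i => q * h i, by simp [Finset.mul_sum, mul_assoc], fun i => ?_⟩
  exact (totalDegree_mul _ _).trans (Nat.add_le_add_left (hh i) _)

theorem boundedSpan_le_span : boundedSpan f n ≤ (Ideal.span (Set.range f)).restrictScalars R := by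
  rintro _ ⟨h, rfl, -⟩
  exact Ideal.sum_mem _ fun i _ => Ideal.mul_mem_left _ _ (Ideal.subset_span ⟨i, rfl⟩)

end MvPolynomial

namespace MonomialOrder

variable {σ K ι : Type*} {mo : MonomialOrder σ} [Field K] [Fintype ι]

theorem div_of_field (G : ι → MvPolynomial σ K) (p : MvPolynomial σ K) :
    ∃ (q : ι → MvPolynomial σ K) (r : MvPolynomial σ K), p = ∑ w, q w * G w + r ∧
      (∀ w, mo.degree (q w * G w) ≼[mo] mo.degree p) ∧ mo.degree r ≼[mo] mo.degree p ∧
      ∀ c ∈ r.support, ∀ w, G w ≠ 0 → ¬ mo.degree (G w) ≤ c := by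
  classical
  obtain ⟨g, r, hpr, hdeg, hr⟩ := mo.div (b := fun w : {w // G w ≠ 0} => G w)
    (fun w => isUnit_leadingCoeff.2 w.2) p
  set q : ι → MvPolynomial σ K := fun w => if hw : G w ≠ 0 then g ⟨w, hw⟩ else 0
  have hsum : ∑ w, q w * G w = Finsupp.linearCombination _ (fun w : {w // G w ≠ 0} => G w) g := by
    rw [← Fintype.sum_subtype_add_sum_subtype (fun w => G w ≠ 0),
      Finsupp.linearCombination_apply, Finsupp.sum_fintype _ _ (by simp)]
    refine (add_eq_left.2 (Finset.sum_eq_zero fun w _ => ?_)).trans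
      (Finset.sum_congr rfl fun w _ => ?_)
    · simp [not_not.1 w.2]
    · simp [q, w.2, mul_comm]
  have hqdeg : ∀ w, mo.degree (q w * G w) ≼[mo] mo.degree p := by
    intro w
    by_cases hw : G w ≠ 0
    · simpa [q, hw, mul_comm] using hdeg ⟨w, hw⟩
    · simp [not_not.1 hw]
  rw [← hsum] at hpr
  refine ⟨q, r, hpr, hqdeg, ?_, fun c hc w hw => hr c hc ⟨w, hw⟩⟩
  rw [eq_sub_of_add_eq' hpr.symm]
  exact degree_sub_le.trans (max_le le_rfl (degree_sum_le.trans (Finset.sup_le fun w _ => hqdeg w)))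

variable (mo) in
def HasStandardRepr (G : ι → MvPolynomial σ K) (p : MvPolynomial σ K) : Prop :=
  ∃ h : ι → MvPolynomial σ K, p = ∑ i, h i * G i ∧ ∀ i, mo.degree (h i * G i) ≼[mo] mo.degree p

theorem degree_sum_lt {α : Type*} {s : Finset α} {f : α → MvPolynomial σ K} {D : σ →₀ ℕ}
    (hD : 0 ≺[mo] D) (h : ∀ a ∈ s, mo.degree (f a) ≺[mo] D) :
    mo.degree (∑ a ∈ s, f a) ≺[mo] D :=
  degree_sum_le.trans_lt <| (Finset.sup_lt_iff (by simpa using hD)).2 h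

theorem degree_add_lt {f g : MvPolynomial σ K} {D : σ →₀ ℕ}
    (hf : mo.degree f ≺[mo] D) (hg : mo.degree g ≺[mo] D) : mo.degree (f + g) ≺[mo] D :=
  degree_add_le.trans_lt (max_lt hf hg)

theorem degree_sub_lt {f g : MvPolynomial σ K} {D : σ →₀ ℕ}
    (hf : mo.degree f ≺[mo] D) (hg : mo.degree g ≺[mo] D) : mo.degree (f - g) ≺[mo] D :=
  degree_sub_le.trans_lt (max_lt hf hg)

theorem degree_sub_leadingTerm_mul_lt {h g : MvPolynomial σ K} (hpos : 0 ≺[mo] mo.degree (h * g)) :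
    mo.degree ((h - mo.leadingTerm h) * g) ≺[mo] mo.degree (h * g) := by
  by_cases h0 : h - mo.leadingTerm h = 0
  · simpa [h0] using hpos
  have hg : g ≠ 0 := by
    rintro rfl
    simp at hpos
  exact (degree_mul_lt_iff_left_lt_of_ne_zero h0 hg).2
    (degree_sub_leadingTerm_lt_degree (degree_ne_zero_of_sub_leadingTerm_ne_zero h0))

variable {G : ι → MvPolynomial σ K}

theorem exists_repr_monomial_mul_sPolynomial {i j : ι}
    (hS : mo.HasStandardRepr G (mo.sPolynomial (G i) (G j))) {D : σ →₀ ℕ}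
    (hle : mo.degree (G i) ⊔ mo.degree (G j) ≤ D) (hD : 0 ≺[mo] D) (c : K) :
    ∃ q : ι → MvPolynomial σ K,
      monomial (D - mo.degree (G i) ⊔ mo.degree (G j)) c * mo.sPolynomial (G i) (G j) =
        ∑ k, q k * G k ∧ ∀ k, mo.degree (q k * G k) ≺[mo] D := by
  set e := D - mo.degree (G i) ⊔ mo.degree (G j)
  by_cases hS0 : mo.sPolynomial (G i) (G j) = 0
  · exact ⟨0, by simp [hS0], fun k => by simpa using hD⟩
  obtain ⟨h, hsum, hdeg⟩ := hS
  refine ⟨fun k => monomial e c * h k, ?_, fun k => ?_⟩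
  · rw [hsum, Finset.mul_sum]
    simp only [mul_assoc]
  · have hlt := (hdeg k).trans_lt (degree_sPolynomial_lt_sup_degree hS0)
    calc mo.toSyn (mo.degree (monomial e c * h k * G k))
        ≤ mo.toSyn (e + mo.degree (h k * G k)) := by
          rw [mul_assoc]
          refine degree_mul_le.trans ?_
          rw [map_add, map_add]
          exact add_le_add_left (degree_monomial_le c) _
      _ < mo.toSyn (e + mo.degree (G i) ⊔ mo.degree (G j)) := by
          rw [map_add, map_add]; exact add_lt_add_right hlt _
      _ = mo.toSyn D := by rw [tsub_add_cancel_of_le hle]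

theorem exists_repr_sum_leadingTerm_mul
    (hS : ∀ i j, mo.HasStandardRepr G (mo.sPolynomial (G i) (G j)))
    {T : Finset ι} {h : ι → MvPolynomial σ K} {D : σ →₀ ℕ}
    (hT : ∀ i ∈ T, mo.degree (h i * G i) = D) (hD : 0 ≺[mo] D)
    (hlt : mo.degree (∑ i ∈ T, mo.leadingTerm (h i) * G i) ≺[mo] D) :
    ∃ q : ι → MvPolynomial σ K,
      ∑ i ∈ T, mo.leadingTerm (h i) * G i = ∑ k, q k * G k ∧
        ∀ k, mo.degree (q k * G k) ≺[mo] D := by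
  have hGle : ∀ i ∈ T, mo.degree (G i) ≤ D := by
    intro i hi
    have hne : h i * G i ≠ 0 := by
      rintro h0
      rw [← hT i hi, h0, degree_zero] at hD
      exact lt_irrefl _ hD
    rw [← hT i hi, degree_mul (left_ne_zero_of_mul hne) (right_ne_zero_of_mul hne)]
    exact le_add_self
  obtain ⟨c, hc⟩ := mo.sPolynomial_decomposition' (d := mo.toSyn D) (B := T)
    (fun i => mo.leadingTerm (h i) * G i)
    (fun i hi => Or.inl (by rw [degree_leadingTerm_mul, hT i hi])) hlt
  have key : ∀ i ∈ T, ∀ j ∈ T, ∃ q : ι → MvPolynomial σ K,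
      c i j • mo.sPolynomial (mo.leadingTerm (h i) * G i) (mo.leadingTerm (h j) * G j) =
        ∑ k, q k * G k ∧ ∀ k, mo.degree (q k * G k) ≺[mo] D := by
    intro i hi j hj
    rw [sPolynomial_leadingTerm_mul', hT i hi, hT j hj, sup_idem, ← smul_mul_assoc,
      smul_monomial]
    exact exists_repr_monomial_mul_sPolynomial (hS i j) (sup_le (hGle i hi) (hGle j hj)) hD _
  choose! Q hQsum hQdeg using key
  refine ⟨fun k => ∑ i ∈ T, ∑ j ∈ T, Q i j k, ?_, fun k => ?_⟩
  · rw [hc]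
    calc ∑ i ∈ T, ∑ j ∈ T, c i j • mo.sPolynomial (mo.leadingTerm (h i) * G i)
          (mo.leadingTerm (h j) * G j)
        = ∑ i ∈ T, ∑ j ∈ T, ∑ k, Q i j k * G k :=
          Finset.sum_congr rfl fun i hi => Finset.sum_congr rfl fun j hj => hQsum i hi j hj
      _ = ∑ i ∈ T, ∑ k, ∑ j ∈ T, Q i j k * G k := Finset.sum_congr rfl fun _ _ => Finset.sum_comm
      _ = ∑ k, (∑ i ∈ T, ∑ j ∈ T, Q i j k) * G k := by
          rw [Finset.sum_comm]
          simp only [Finset.sum_mul]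
  · simp only [Finset.sum_mul]
    exact degree_sum_lt hD fun i hi => degree_sum_lt hD fun j hj => hQdeg i hi j hj k

theorem exists_repr_degree_lt
    (hS : ∀ i j, mo.HasStandardRepr G (mo.sPolynomial (G i) (G j)))
    {p : MvPolynomial σ K} {h : ι → MvPolynomial σ K} {D : σ →₀ ℕ} (hp : p = ∑ i, h i * G i)
    (hle : ∀ i, mo.degree (h i * G i) ≼[mo] D) (hlt : mo.degree p ≺[mo] D) :
    ∃ h' : ι → MvPolynomial σ K, p = ∑ i, h' i * G i ∧ ∀ i, mo.degree (h' i * G i) ≺[mo] D := by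
  classical
  have hD : 0 ≺[mo] D := by simpa using (mo.zero_le _).trans_lt hlt
  set T := Finset.univ.filter fun i => mo.degree (h i * G i) = D
  set tail : ι → MvPolynomial σ K := fun i =>
    if mo.degree (h i * G i) = D then h i - mo.leadingTerm (h i) else h i
  have htail : ∀ i, mo.degree (tail i * G i) ≺[mo] D := by
    intro i
    by_cases hi : mo.degree (h i * G i) = D
    · simp only [tail, hi, if_true]
      rw [← hi] at hD ⊢
      exact degree_sub_leadingTerm_mul_lt hD
    · simp only [tail, hi, if_false]
      exact (hle i).lt_of_ne fun h => hi (mo.toSyn.injective h)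
  have hsplit : p = ∑ i ∈ T, mo.leadingTerm (h i) * G i + ∑ i, tail i * G i := by
    rw [hp, Finset.sum_filter, ← Finset.sum_add_distrib]
    refine Finset.sum_congr rfl fun i _ => ?_
    simp only [tail]
    split_ifs <;> ring
  have hTlt : mo.degree (∑ i ∈ T, mo.leadingTerm (h i) * G i) ≺[mo] D := by
    rw [eq_sub_of_add_eq hsplit.symm]
    exact degree_sub_lt hlt (degree_sum_lt hD fun i _ => htail i)
  obtain ⟨q, hq, hqdeg⟩ :=
    exists_repr_sum_leadingTerm_mul hS (fun i hi => (Finset.mem_filter.1 hi).2) hD hTlt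
  refine ⟨q + tail, ?_, fun i => ?_⟩
  · rw [hsplit, hq, ← Finset.sum_add_distrib]
    simp only [Pi.add_apply, add_mul]
  · rw [Pi.add_apply, add_mul]
    exact degree_add_lt (hqdeg i) (htail i)

theorem hasStandardRepr_of_mem_span
    (hS : ∀ i j, mo.HasStandardRepr G (mo.sPolynomial (G i) (G j)))
    {p : MvPolynomial σ K} (hp : p ∈ Ideal.span (Set.range G)) : mo.HasStandardRepr G p := by
  classical
  obtain ⟨h, hh⟩ := Ideal.mem_span_range_iff_exists_fun.1 hp
  suffices ∀ δ : mo.syn, ∀ h : ι → MvPolynomial σ K, p = ∑ i, h i * G i →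
      (∀ i, mo.toSyn (mo.degree (h i * G i)) ≤ δ) → mo.HasStandardRepr G p from
    this _ h hh.symm fun i => Finset.le_sup (f := fun i => mo.toSyn (mo.degree (h i * G i)))
      (Finset.mem_univ i)
  intro δ
  induction δ using WellFoundedLT.induction with
  | _ δ ih =>
  intro h hp hle
  by_cases hδ : δ ≤ mo.toSyn (mo.degree p)
  · exact ⟨h, hp, fun i => (hle i).trans hδ⟩
  obtain ⟨h', hp', hlt⟩ := exists_repr_degree_lt hS (D := mo.toSyn.symm δ) hp
    (by simpa using hle) (by simpa using not_le.1 hδ)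
  set δ' := Finset.univ.sup fun i => mo.toSyn (mo.degree (h' i * G i))
  have hδ' : δ' < δ :=
    (Finset.sup_lt_iff ((mo.zero_le _).trans_lt (not_le.1 hδ))).2 fun i _ => by simpa using hlt i
  exact ih δ' hδ' h' hp' fun i => Finset.le_sup (f := fun i => mo.toSyn (mo.degree (h' i * G i)))
    (Finset.mem_univ i)

end MonomialOrder

def BoundsControlledBadSequences (m : ℕ) (h : ℕ → ℕ) (B : ℕ) : Prop :=
  ∀ (u : ℕ) (γ : Fin u → Fin m → ℕ), (∀ i j : Fin u, i < j → ¬ γ i ≤ γ j) →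
    (∀ i : Fin u, ∑ k, γ i k ≤ h (i.1 + 1)) → u ≤ B

namespace MvPolynomial

open MonomialOrder

section DegLex

variable {σ K ι ι' : Type*} [LinearOrder σ] [WellFoundedGT σ] [Field K] [Fintype ι] [Fintype ι']

theorem totalDegree_le_of_degLex_degree_mul_le {q G p : MvPolynomial σ K} (hG : G ≠ 0)
    (h : degLex.degree (q * G) ≼[degLex] degLex.degree p) : q.totalDegree ≤ p.totalDegree := by
  by_cases hq : q = 0
  · simp [hq]
  calc q.totalDegree ≤ (q * G).totalDegree := by
        rw [totalDegree_mul_of_isDomain hq hG]; exact Nat.le_add_right _ _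
    _ ≤ p.totalDegree := degLex_totalDegree_monotone h

variable {f : ι → MvPolynomial σ K} {D E : ℕ}

theorem mul_mem_boundedSpan_of_degLex_degree_le {q G p : MvPolynomial σ K}
    (hG : G ∈ boundedSpan f E) (h : degLex.degree (q * G) ≼[degLex] degLex.degree p) :
    q * G ∈ boundedSpan f (p.totalDegree + E) := by
  by_cases hG0 : G = 0
  · simp [hG0]
  exact boundedSpan_mono (Nat.add_le_add_right (totalDegree_le_of_degLex_degree_mul_le hG0 h) E)
    (mul_mem_boundedSpan q hG)

theorem totalDegree_monomial_sup_sub_le (p q : MvPolynomial σ K) (c : K) :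
    (monomial (degLex.degree p ⊔ degLex.degree q - degLex.degree p) c).totalDegree ≤
      q.totalDegree := by
  rw [← degree_degLexDegree (f := q)]
  refine (totalDegree_monomial_le _ c).trans (Finsupp.degree_mono ?_)
  exact tsub_le_iff_left.2 (sup_le le_self_add le_add_self)

theorem totalDegree_sPolynomial_le (p q : MvPolynomial σ K) :
    (degLex.sPolynomial p q).totalDegree ≤ p.totalDegree + q.totalDegree := by
  rw [sPolynomial_def]
  refine (totalDegree_sub _ _).trans (max_le ?_ ?_)
  · refine (totalDegree_mul _ _).trans ?_
    have := totalDegree_monomial_sup_sub_le p q (degLex.leadingCoeff q)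
    omega
  · refine (totalDegree_mul _ _).trans ?_
    have := totalDegree_monomial_sup_sub_le q p (degLex.leadingCoeff p)
    rw [sup_comm] at this
    omega

theorem sPolynomial_mem_boundedSpan {p q : MvPolynomial σ K} (hp : p ∈ boundedSpan f E)
    (hq : q ∈ boundedSpan f E) (hpD : p.totalDegree ≤ D) (hqD : q.totalDegree ≤ D) :
    degLex.sPolynomial p q ∈ boundedSpan f (D + E) := by
  rw [sPolynomial_def]
  refine sub_mem (boundedSpan_mono ?_ (mul_mem_boundedSpan _ hp))
    (boundedSpan_mono ?_ (mul_mem_boundedSpan _ hq))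
  · exact Nat.add_le_add_right ((totalDegree_monomial_sup_sub_le p q _).trans hqD) E
  · rw [sup_comm]
    exact Nat.add_le_add_right ((totalDegree_monomial_sup_sub_le q p _).trans hpD) E

theorem hasStandardRepr_sPolynomial_or_exists_remainder {G : ι' → MvPolynomial σ K}
    (hdeg : ∀ w, (G w).totalDegree ≤ D) (hspan : ∀ w, G w ∈ boundedSpan f E) (a b : ι') :
    degLex.HasStandardRepr G (degLex.sPolynomial (G a) (G b)) ∨
      ∃ r, r ≠ 0 ∧ (∀ w, G w ≠ 0 → ¬ degLex.degree (G w) ≤ degLex.degree r) ∧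
        r.totalDegree ≤ 2 * D ∧ r ∈ boundedSpan f (2 * D + E) := by
  set S := degLex.sPolynomial (G a) (G b)
  have hSdeg : S.totalDegree ≤ 2 * D :=
    (totalDegree_sPolynomial_le _ _).trans (by linarith [hdeg a, hdeg b])
  have hSspan : S ∈ boundedSpan f (2 * D + E) :=
    boundedSpan_mono (by omega) (sPolynomial_mem_boundedSpan (hspan a) (hspan b) (hdeg a) (hdeg b))
  obtain ⟨q, r, hSqr, hqdeg, hrdeg, hr⟩ := degLex.div_of_field G S
  by_cases hr0 : r = 0
  · exact Or.inl ⟨q, by simpa [hr0] using hSqr, hqdeg⟩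
  refine Or.inr ⟨r, hr0, fun w hw => hr _ (degree_mem_support hr0) w hw,
    (degLex_totalDegree_monotone hrdeg).trans hSdeg, ?_⟩
  rw [eq_sub_of_add_eq' hSqr.symm]
  exact sub_mem hSspan (Submodule.sum_mem _ fun w _ => boundedSpan_mono (by omega)
    (mul_mem_boundedSpan_of_degLex_degree_le (hspan w) (hqdeg w)))

-- `c 0, …, c (t - 1)` are the S-polynomial remainders adjoined to `f`; later values are unused.
def IsBoundedChain (f : ι → MvPolynomial σ K) (d : ℕ) (c : ℕ → MvPolynomial σ K) (t : ℕ) :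
    Prop :=
  ∀ j < t, c j ≠ 0 ∧ (c j).totalDegree ≤ 2 ^ (j + 1) * d ∧
    c j ∈ boundedSpan f ((2 ^ (j + 2) - 2) * d) ∧
    (∀ i, f i ≠ 0 → ¬ degLex.degree (f i) ≤ degLex.degree (c j)) ∧
    ∀ k < j, ¬ degLex.degree (c k) ≤ degLex.degree (c j)

def chainFamily (f : ι → MvPolynomial σ K) (c : ℕ → MvPolynomial σ K) (t : ℕ) :
    ι ⊕ Fin t → MvPolynomial σ K :=
  Sum.elim f fun j => c j

variable {d t : ℕ} {c : ℕ → MvPolynomial σ K}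

theorem IsBoundedChain.totalDegree_le (hc : IsBoundedChain f d c t)
    (hfd : ∀ i, (f i).totalDegree ≤ d) (w : ι ⊕ Fin t) :
    (chainFamily f c t w).totalDegree ≤ 2 ^ t * d := by
  rcases w with i | j
  · exact (hfd i).trans (Nat.le_mul_of_pos_left d (Nat.two_pow_pos t))
  · exact (hc j j.2).2.1.trans (Nat.mul_le_mul_right d (Nat.pow_le_pow_right two_pos j.2))

theorem IsBoundedChain.mem_boundedSpan (hc : IsBoundedChain f d c t) (w : ι ⊕ Fin t) :
    chainFamily f c t w ∈ boundedSpan f ((2 ^ (t + 1) - 2) * d) := by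
  classical
  rcases w with i | j
  · exact boundedSpan_mono (Nat.zero_le _) (apply_mem_boundedSpan_zero i)
  · refine boundedSpan_mono (Nat.mul_le_mul_right d (Nat.sub_le_sub_right ?_ 2)) (hc j j.2).2.2.1
    exact Nat.pow_le_pow_right two_pos (by omega)

theorem IsBoundedChain.hasStandardRepr_or_extend (hc : IsBoundedChain f d c t)
    (hfd : ∀ i, (f i).totalDegree ≤ d) :
    (∀ a b, degLex.HasStandardRepr (chainFamily f c t)
      (degLex.sPolynomial (chainFamily f c t a) (chainFamily f c t b))) ∨
      ∃ c', IsBoundedChain f d c' (t + 1) := by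
  refine or_iff_not_imp_left.2 fun hS => ?_
  simp only [not_forall] at hS
  obtain ⟨a, b, hab⟩ := hS
  obtain ⟨r, hr0, hrdiv, hrdeg, hrspan⟩ := (hasStandardRepr_sPolynomial_or_exists_remainder
    (hc.totalDegree_le hfd) hc.mem_boundedSpan a b).resolve_left hab
  have hupd : ∀ k < t, Function.update c t r k = c k := fun k hk => Function.update_of_ne hk.ne _ _
  refine ⟨Function.update c t r, fun j hj => ?_⟩
  rcases Nat.lt_succ_iff_lt_or_eq.1 hj with hj | rfl
  · obtain ⟨h0, hdeg, hspan, hf, hprev⟩ := hc j hj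
    rw [hupd j hj]
    exact ⟨h0, hdeg, hspan, hf, fun k hk => by rw [hupd k (hk.trans hj)]; exact hprev k hk⟩
  rw [Function.update_self]
  refine ⟨hr0, hrdeg.trans_eq (by ring), boundedSpan_mono ?_ hrspan,
    fun i hi => hrdiv (Sum.inl i) hi, fun k hk => ?_⟩
  · calc 2 * (2 ^ j * d) + (2 ^ (j + 1) - 2) * d = (2 * 2 ^ j + (2 ^ (j + 1) - 2)) * d := by ring
      _ ≤ (2 ^ (j + 2) - 2) * d := by
        refine Nat.mul_le_mul_right d ?_
        rw [pow_succ, pow_succ]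
        omega
  · rw [hupd k hk]
    exact hrdiv (Sum.inr ⟨k, hk⟩) (hc k hk).1

end DegLex

variable {K ι : Type*} [Field K] [Fintype ι] {m B d : ℕ} {f : ι → MvPolynomial (Fin m) K}

theorem IsBoundedChain.succ_le {c : ℕ → MvPolynomial (Fin m) K} {t : ℕ}
    (hc : IsBoundedChain f d c t) (hB : BoundsControlledBadSequences m (fun n => 3 ^ n * d) B)
    {i₀ : ι} (hi₀ : f i₀ ≠ 0) (hfd : (f i₀).totalDegree ≤ d) : t + 1 ≤ B := by
  refine hB (t + 1) (Fin.cons (⇑(degLex.degree (f i₀))) fun j : Fin t => ⇑(degLex.degree (c j)))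
    (fun i j hij => ?_) (fun i => ?_)
  · induction j using Fin.cases with
    | zero => exact absurd hij (Fin.not_lt_zero i)
    | succ j =>
      induction i using Fin.cases with
      | zero =>
        simpa [Finsupp.coe_le_coe] using (hc j j.2).2.2.2.1 i₀ hi₀
      | succ i =>
        simpa [Finsupp.coe_le_coe] using (hc j j.2).2.2.2.2 i (Fin.succ_lt_succ_iff.1 hij)
  · induction i using Fin.cases with
    | zero =>
      simp only [Fin.cons_zero, ← Finsupp.degree_eq_sum, degree_degLexDegree]
      simpa using hfd.trans (Nat.le_mul_of_pos_left d (by norm_num))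
    | succ j =>
      simp only [Fin.cons_succ, ← Finsupp.degree_eq_sum, degree_degLexDegree, Fin.val_succ]
      refine (hc j j.2).2.1.trans (Nat.mul_le_mul_right d ?_)
      calc 2 ^ (j.1 + 1) ≤ 3 ^ (j.1 + 1) := Nat.pow_le_pow_left (by norm_num) _
        _ ≤ 3 ^ (j.1 + 1 + 1) := Nat.pow_le_pow_right (by norm_num) (by omega)

theorem exists_isBoundedChain_hasStandardRepr (hfd : ∀ i, (f i).totalDegree ≤ d)
    (hB : BoundsControlledBadSequences m (fun n => 3 ^ n * d) B) {i₀ : ι} (hi₀ : f i₀ ≠ 0) :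
    ∃ t c, t + 1 ≤ B ∧ IsBoundedChain f d c t ∧
      ∀ a b, degLex.HasStandardRepr (chainFamily f c t)
        (degLex.sPolynomial (chainFamily f c t a) (chainFamily f c t b)) := by
  by_contra hcon
  have hall : ∀ t, ∃ c, IsBoundedChain f d c t := by
    intro t
    induction t with
    | zero => exact ⟨0, fun j hj => absurd hj (Nat.not_lt_zero j)⟩
    | succ t ih =>
      obtain ⟨c, hc⟩ := ih
      exact (hc.hasStandardRepr_or_extend hfd).resolve_left fun hS =>
        hcon ⟨t, c, hc.succ_le hB hi₀ (hfd i₀), hc, hS⟩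
  obtain ⟨c, hc⟩ := hall B
  exact Nat.not_succ_le_self B (hc.succ_le hB hi₀ (hfd i₀))

theorem mem_boundedSpan_of_mem_span (hfd : ∀ i, (f i).totalDegree ≤ d)
    (hB : BoundsControlledBadSequences m (fun n => 3 ^ n * d) B) {g : MvPolynomial (Fin m) K}
    (hg : g ∈ Ideal.span (Set.range f)) : g ∈ boundedSpan f ((2 ^ B - 2) * d + g.totalDegree) := by
  by_cases hf : ∀ i, f i = 0
  · rw [Ideal.span_eq_bot.2 (by rintro _ ⟨i, rfl⟩; exact hf i), Ideal.mem_bot] at hg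
    rw [hg]
    exact zero_mem _
  obtain ⟨i₀, hi₀⟩ := not_forall.1 hf
  obtain ⟨t, c, htB, hc, hS⟩ := exists_isBoundedChain_hasStandardRepr hfd hB hi₀
  have hgG : g ∈ Ideal.span (Set.range (chainFamily f c t)) :=
    Ideal.span_mono (by rintro _ ⟨i, rfl⟩; exact ⟨Sum.inl i, rfl⟩) hg
  obtain ⟨h, hgh, hdeg⟩ := hasStandardRepr_of_mem_span hS hgG
  have hsum : ∑ w, h w * chainFamily f c t w ∈
      boundedSpan f (g.totalDegree + (2 ^ (t + 1) - 2) * d) :=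
    Submodule.sum_mem _ fun w _ =>
      mul_mem_boundedSpan_of_degLex_degree_le (hc.mem_boundedSpan w) (hdeg w)
  rw [← hgh] at hsum
  refine boundedSpan_mono ?_ hsum
  rw [add_comm]
  exact Nat.add_le_add_right (Nat.mul_le_mul_right d
    (Nat.sub_le_sub_right (Nat.pow_le_pow_right two_pos htB) 2)) _

end MvPolynomial

theorem Nat.two_pow_sub_two_le_three_pow_pred_sub_one (n : ℕ) : 2 ^ n - 2 ≤ 3 ^ (n - 1) - 1 := by
  induction n with
  | zero => simp
  | succ n ih =>
    rcases n with _ | n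
    · simp
    have h2 : 2 ≤ 2 ^ (n + 1) := Nat.le_self_pow (by omega) 2
    have h3 : 1 ≤ 3 ^ n := Nat.one_le_pow _ _ (by norm_num)
    simp only [Nat.add_sub_cancel] at ih ⊢
    rw [pow_succ 2 (n + 1), pow_succ 3 n]
    omega

theorem stmt_18_general (m d : ℕ) (hd : 1 ≤ d)
    (B : ℕ → (ℕ → ℕ) → ℕ)
    -- B has the bounding property for antichains in ℕ^m
    (hB : ∀ h : ℕ → ℕ, (∀ n, 1 ≤ h n) → Monotone h →
      ∀ (u : ℕ) (γ : Fin u → (Fin m → ℕ)),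
        (∀ i j : Fin u, i < j → ¬ γ i ≤ γ j) →
        (∀ i : Fin u, (∑ k, γ i k) ≤ h (i.1 + 1)) →
        u ≤ B m h) :
    ∀ (K : Type) (_ : Field K) (s : ℕ)
      (g : MvPolynomial (Fin m) K) (f : Fin s → MvPolynomial (Fin m) K),
      (∀ i, (f i).totalDegree ≤ d) →
      (g ∈ Ideal.span (Set.range f) ↔
        ∃ h : Fin s → MvPolynomial (Fin m) K,
          g = ∑ i, h i * f i ∧
          ∀ i, (h i).totalDegree ≤
            (3 ^ (B m (fun n => 3 ^ n * d) - 1) - 1) * d + g.totalDegree) := by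
  intro K _ s g f hfd
  have hB' : BoundsControlledBadSequences m (fun n => 3 ^ n * d) (B m fun n => 3 ^ n * d) :=
    hB _ (fun n => hd.trans (Nat.le_mul_of_pos_left d (by positivity)))
      (fun a b hab => Nat.mul_le_mul_right d (Nat.pow_le_pow_right (by norm_num) hab))
  refine ⟨fun hg => boundedSpan_mono ?_ (mem_boundedSpan_of_mem_span hfd hB' hg),
    fun hg => boundedSpan_le_span hg⟩
  exact Nat.add_le_add_right
    (Nat.mul_le_mul_right d (Nat.two_pow_sub_two_le_three_pow_pred_sub_one _)) _

theorem stmt_18 (m d : ℕ) (hm : 1 ≤ m) (hd : 1 ≤ d)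
    (B : ℕ → (ℕ → ℕ) → ℕ)
    -- B has the bounding property for antichains in ℕ^m
    (hB : ∀ h : ℕ → ℕ, (∀ n, 1 ≤ h n) → Monotone h →
      ∀ (u : ℕ) (γ : Fin u → (Fin m → ℕ)),
        (∀ i j : Fin u, i < j → ¬ γ i ≤ γ j) →
        (∀ i : Fin u, (∑ k, γ i k) ≤ h (i.1 + 1)) →
        u ≤ B m h) :
    ∀ (K : Type) (_ : Field K) (s : ℕ)
      (g : MvPolynomial (Fin m) K) (f : Fin s → MvPolynomial (Fin m) K),
      (∀ i, (f i).totalDegree ≤ d) →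
      (g ∈ Ideal.span (Set.range f) ↔
        ∃ h : Fin s → MvPolynomial (Fin m) K,
          g = ∑ i, h i * f i ∧
          ∀ i, (h i).totalDegree ≤
            (3 ^ (B m (fun n => 3 ^ n * d) - 1) - 1) * d + g.totalDegree) :=
  stmt_18_general m d hd B hB
end
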